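/- Let b_1,b_2,b_3,b_4 be nonzero real numbers and x_1,x_2,x_3,x_4 points of ℝ² such that for all i ≠ j one has ‖x_i − x_j‖² = (1/b_i + 1/b_j)² (four pairwise tangent oriented circles with compatible orientations, i.e. an ordered oriented Descartes configuration containing no lines, where b_i is the signed curvature and x_i the center of the i-th circle). Let M be the 4×3 real matrix whose i-th row is (b_i, b_i·x_i(1), b_i·x_i(2)). Then MᵀQ_D·M equals the 3×3 diagonal matrix diag(0,2,2). -/

import Mathlib

/-!
Following Lagarias–Mallows–Wilks, append to each row of `M` the curvature
`b̄ = b ‖x‖² - 1/b` of the image of the circle under inversion in the unit circle.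
For the resulting 4×4 matrix `W`, the pairing of two rows under the inverse of the
Wilker form `Q_W = [[0,-4,0,0],[-4,0,0,0],[0,0,2,0],[0,0,0,2]]` equals
`(b/b' + b'/b - b b' ‖x - x'‖²) / 4`, i.e. `1/2` on the diagonal and, by tangency,
`-1/2` off it: `W Q_W⁻¹ Wᵀ = Q_D`. As `Q_D² = 1`, this dualizes to `Wᵀ Q_D W = Q_W`,
and `Mᵀ Q_D M` is the lower-right 3×3 block of `Q_W`.
-/

open Matrix

noncomputable def QD : Matrix (Fin 4) (Fin 4) ℝ :=
  Matrix.of fun i j => if i = j then 1/2 else -1/2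

theorem Matrix.mul_mul_eq_of_mul_mul_mul_eq_one {R n : Type*} [CommRing R] [Fintype n]
    [DecidableEq n] {A B C K Q : Matrix n n R} (hQ : Q * (A * B * C) = 1) (hBK : B * K = 1) :
    C * Q * A = K := by
  have hC : C * (Q * A * B) = 1 :=
    mul_eq_one_comm.mp (by simpa only [Matrix.mul_assoc] using hQ)
  calc C * Q * A = C * Q * A * (B * K) := by rw [hBK, Matrix.mul_one]
    _ = C * (Q * A * B) * K := by simp only [Matrix.mul_assoc]
    _ = K := by rw [hC, Matrix.one_mul]

theorem QD_mul_QD : QD * QD = 1 := by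
  ext i j
  fin_cases i <;> fin_cases j <;> simp [QD, mul_apply, Fin.sum_univ_four, one_apply] <;> norm_num

def wilkerForm : Matrix (Fin 4) (Fin 4) ℝ :=
  !![0, -4, 0, 0; -4, 0, 0, 0; 0, 0, 2, 0; 0, 0, 0, 2]

noncomputable def wilkerFormInv : Matrix (Fin 4) (Fin 4) ℝ :=
  !![0, -1/4, 0, 0; -1/4, 0, 0, 0; 0, 0, 1/2, 0; 0, 0, 0, 1/2]

theorem wilkerFormInv_mul_wilkerForm : wilkerFormInv * wilkerForm = 1 := by
  ext i j
  fin_cases i <;> fin_cases j <;>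
    simp [wilkerForm, wilkerFormInv, mul_apply, Fin.sum_univ_four, one_apply]

noncomputable def augmentedCoords (b : ℝ) (x : EuclideanSpace ℝ (Fin 2)) : Fin 4 → ℝ :=
  ![b * ‖x‖ ^ 2 - 1 / b, b, b * x 0, b * x 1]

theorem augmentedCoords_dotProduct_mulVec (b b' : ℝ) (x x' : EuclideanSpace ℝ (Fin 2)) :
    augmentedCoords b x ⬝ᵥ wilkerFormInv *ᵥ augmentedCoords b' x' =
      (b / b' + b' / b - b * b' * ‖x - x'‖ ^ 2) / 4 := by
  have hinner : inner ℝ x x' = x 0 * x' 0 + x 1 * x' 1 := by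
    simp [PiLp.inner_apply, Fin.sum_univ_two, mul_comm]
  rw [norm_sub_sq_real, hinner]
  simp only [dotProduct, augmentedCoords, mulVec, wilkerFormInv, of_apply, cons_val',
    cons_val_fin_one, Fin.sum_univ_four, cons_val_zero, cons_val_one, cons_val, zero_mul,
    zero_add, add_zero]
  ring

theorem augmentedCoords_dotProduct_mulVec_self {b : ℝ} (hb : b ≠ 0)
    (x : EuclideanSpace ℝ (Fin 2)) :
    augmentedCoords b x ⬝ᵥ wilkerFormInv *ᵥ augmentedCoords b x = 1 / 2 := by
  rw [augmentedCoords_dotProduct_mulVec, sub_self, norm_zero]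
  field_simp
  ring

theorem augmentedCoords_dotProduct_mulVec_of_tangent {b b' : ℝ} (hb : b ≠ 0) (hb' : b' ≠ 0)
    {x x' : EuclideanSpace ℝ (Fin 2)} (h : ‖x - x'‖ ^ 2 = (1 / b + 1 / b') ^ 2) :
    augmentedCoords b x ⬝ᵥ wilkerFormInv *ᵥ augmentedCoords b' x' = -1 / 2 := by
  rw [augmentedCoords_dotProduct_mulVec, h]
  field_simp
  ring

theorem curvature_center_matrix_eq
    (b : Fin 4 → ℝ) (hb : ∀ i, b i ≠ 0)
    (x : Fin 4 → EuclideanSpace ℝ (Fin 2))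
    (htangent : ∀ i j, i ≠ j → ‖x i - x j‖ ^ 2 = (1 / b i + 1 / b j) ^ 2)
    (M : Matrix (Fin 4) (Fin 3) ℝ)
    (hM : M = Matrix.of fun i k => ![b i, b i * x i 0, b i * x i 1] k) :
    Mᵀ * QD * M = Matrix.diagonal ![0, 2, 2] := by
  set W : Matrix (Fin 4) (Fin 4) ℝ := of fun i => augmentedCoords (b i) (x i)
  have hgram : W * wilkerFormInv * Wᵀ = QD := by
    ext i j
    rw [mul_mul_apply]
    by_cases hij : i = j
    · subst hij
      simp only [QD, of_apply]
      exact augmentedCoords_dotProduct_mulVec_self (hb i) (x i)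
    · simp only [QD, of_apply, if_neg hij]
      exact augmentedCoords_dotProduct_mulVec_of_tangent (hb i) (hb j) (htangent i j hij)
  have hW : Wᵀ * QD * W = wilkerForm :=
    mul_mul_eq_of_mul_mul_mul_eq_one (by rw [hgram, QD_mul_QD]) wilkerFormInv_mul_wilkerForm
  have hMW : M = W.submatrix id Fin.succ := by
    ext i k
    fin_cases k <;> simp [hM, W, augmentedCoords]
  rw [hMW, transpose_submatrix, ← submatrix_id_id QD,
    ← submatrix_mul _ _ _ id _ Function.bijective_id,
    ← submatrix_mul _ _ _ id _ Function.bijective_id, hW]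
  ext k l
  fin_cases k <;> fin_cases l <;> simp [wilkerForm]
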